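/- arXiv:2202.12579 — 3 statements merged into one kernel-verified Lean document; each statement's English description precedes it below -/
import Mathlib

section
/- For any two càdlàg functions f, g : [0,1] → R^d with f(0)=g(0)=0, the Hausdorff distance between the closures of their images is at most the Skorokhod J1 distance between f and g. Consequently, the map sending f to the closed convex hull of its image is Lipschitz continuous with constant 1 from the Skorokhod space to the space of compact convex sets with the Hausdorff metric. -/
open Metric Set Filter

private lemma cadlag_bounded {d : ℕ} (f : Set.Icc (0:ℝ) 1 → EuclideanSpace ℝ (Fin d))
    (hf_rc : ∀ t, ContinuousWithinAt f (Set.Ici t) t)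
    (hf_ll : ∀ t : Set.Icc (0:ℝ) 1, ∃ L, Tendsto f (nhdsWithin t (Set.Iio t)) (nhds L)) :
    ∃ M, ∀ t, ‖f t‖ ≤ M := by
  have hloc : ∀ t : Set.Icc (0:ℝ) 1, ∃ M, ∀ᶠ s in nhds t, ‖f s‖ ≤ M := by
    intro t
    obtain ⟨L, hL⟩ := hf_ll t
    have h1 : ∀ᶠ s in nhdsWithin t (Set.Iio t), ‖f s‖ ≤ ‖L‖ + 1 := by
      filter_upwards [hL (Metric.ball_mem_nhds L one_pos)] with s hs
      have h := mem_ball.mp hs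
      have h2 : ‖f s‖ - ‖L‖ ≤ dist (f s) L := by
        rw [dist_eq_norm]; exact norm_sub_norm_le _ _
      linarith
    have h2 : ∀ᶠ s in nhdsWithin t (Set.Ici t), ‖f s‖ ≤ ‖f t‖ + 1 := by
      filter_upwards [hf_rc t (Metric.ball_mem_nhds (f t) one_pos)] with s hs
      have h := mem_ball.mp hs
      have h2 : ‖f s‖ - ‖f t‖ ≤ dist (f s) (f t) := by
        rw [dist_eq_norm]; exact norm_sub_norm_le _ _
      linarith
    have hsup : nhds t = nhdsWithin t (Set.Iio t) ⊔ nhdsWithin t (Set.Ici t) := by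
      rw [← nhdsWithin_univ, ← Set.Iio_union_Ici, nhdsWithin_union]
    refine ⟨max (‖L‖ + 1) (‖f t‖ + 1), ?_⟩
    rw [hsup, eventually_sup]
    constructor
    · filter_upwards [h1] with s hs using hs.trans (le_max_left _ _)
    · filter_upwards [h2] with s hs using hs.trans (le_max_right _ _)
  choose M hM using hloc
  obtain ⟨s, hs⟩ := isCompact_univ.elim_nhds_subcover
    (fun t => {u | ‖f u‖ ≤ M t}) (fun t _ => hM t)
  refine ⟨∑ x ∈ s, |M x|, fun u => ?_⟩
  have hu := hs.2 (Set.mem_univ u)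
  simp only [Set.mem_iUnion, Set.mem_setOf_eq] at hu
  obtain ⟨x, hx, hux⟩ := hu
  calc ‖f u‖ ≤ M x := hux
    _ ≤ |M x| := le_abs_self _
    _ ≤ ∑ y ∈ s, |M y| := Finset.single_le_sum (f := fun y => |M y|) (fun _ _ => abs_nonneg _) hx

/-- The Skorokhod `J1` distance on functions `[0,1] → ℝ^d`:
`dist_{J1}(f,g) = inf_λ (‖f − g∘λ‖_∞ + ‖λ − Id‖_∞)`, the infimum being taken over all
increasing continuous bijections `λ` of `[0,1]`. -/
noncomputable def distJ1 {d : ℕ} (f g : Set.Icc (0:ℝ) 1 → EuclideanSpace ℝ (Fin d)) : ℝ :=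
  sInf { r : ℝ | ∃ lam : Set.Icc (0:ℝ) 1 → Set.Icc (0:ℝ) 1,
      Continuous lam ∧ StrictMono lam ∧ Function.Bijective lam ∧
      r = (⨆ t : Set.Icc (0:ℝ) 1, ‖f t - g (lam t)‖) +
          ⨆ t : Set.Icc (0:ℝ) 1, |((lam t : ℝ)) - (t : ℝ)| }

/-- For càdlàg `f, g : [0,1] → ℝ^d` with `f(0) = g(0) = 0`, the Hausdorff distance between the
closures of their images is at most the Skorokhod `J1` distance between `f` and `g`;
consequently the map `f ↦ conv f[0,1]` (closed convex hull of the path) is `1`-Lipschitz from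
the Skorokhod space to the space of convex bodies with the Hausdorff metric. -/
theorem hausdorffDist_le_distJ1 {d : ℕ} (f g : Set.Icc (0:ℝ) 1 → EuclideanSpace ℝ (Fin d))
    (hf0 : f ⟨0, by norm_num⟩ = 0) (hg0 : g ⟨0, by norm_num⟩ = 0)
    (hf_rc : ∀ t, ContinuousWithinAt f (Set.Ici t) t)
    (hf_ll : ∀ t : Set.Icc (0:ℝ) 1, ∃ L, Tendsto f (nhdsWithin t (Set.Iio t)) (nhds L))
    (hg_rc : ∀ t, ContinuousWithinAt g (Set.Ici t) t)
    (hg_ll : ∀ t : Set.Icc (0:ℝ) 1, ∃ L, Tendsto g (nhdsWithin t (Set.Iio t)) (nhds L)) :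
    hausdorffDist (closure (Set.range f)) (closure (Set.range g)) ≤ distJ1 f g ∧
    hausdorffDist (convexHull ℝ (closure (Set.range f))) (convexHull ℝ (closure (Set.range g)))
      ≤ distJ1 f g := by
  obtain ⟨Mf, hMf⟩ := cadlag_bounded f hf_rc hf_ll
  obtain ⟨Mg, hMg⟩ := cadlag_bounded g hg_rc hg_ll
  have hSne : { r : ℝ | ∃ lam : Set.Icc (0:ℝ) 1 → Set.Icc (0:ℝ) 1,
      Continuous lam ∧ StrictMono lam ∧ Function.Bijective lam ∧
      r = (⨆ t : Set.Icc (0:ℝ) 1, ‖f t - g (lam t)‖) +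
          ⨆ t : Set.Icc (0:ℝ) 1, |((lam t : ℝ)) - (t : ℝ)| }.Nonempty :=
    ⟨_, id, continuous_id, strictMono_id, Function.bijective_id, rfl⟩
  have key : ∀ r ∈ { r : ℝ | ∃ lam : Set.Icc (0:ℝ) 1 → Set.Icc (0:ℝ) 1,
      Continuous lam ∧ StrictMono lam ∧ Function.Bijective lam ∧
      r = (⨆ t : Set.Icc (0:ℝ) 1, ‖f t - g (lam t)‖) +
          ⨆ t : Set.Icc (0:ℝ) 1, |((lam t : ℝ)) - (t : ℝ)| },
      hausdorffDist (closure (Set.range f)) (closure (Set.range g)) ≤ r ∧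
      hausdorffDist (convexHull ℝ (closure (Set.range f)))
        (convexHull ℝ (closure (Set.range g))) ≤ r := by
    rintro r ⟨lam, hcont, hmono, hbij, rfl⟩
    set A := ⨆ t : Set.Icc (0:ℝ) 1, ‖f t - g (lam t)‖ with hAdef
    set B := ⨆ t : Set.Icc (0:ℝ) 1, |((lam t : ℝ)) - (t : ℝ)| with hBdef
    have hB0 : 0 ≤ B := Real.iSup_nonneg fun t => abs_nonneg _
    have hAbdd : BddAbove (Set.range fun t : Set.Icc (0:ℝ) 1 => ‖f t - g (lam t)‖) := by
      refine ⟨Mf + Mg, ?_⟩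
      rintro x ⟨t, rfl⟩
      exact (norm_sub_le _ _).trans (add_le_add (hMf t) (hMg (lam t)))
    have hA : ∀ t, ‖f t - g (lam t)‖ ≤ A := fun t => le_ciSup hAbdd t
    have hA0 : 0 ≤ A := Real.iSup_nonneg fun t => norm_nonneg _
    have h1 : hausdorffDist (Set.range f) (Set.range g) ≤ A := by
      apply hausdorffDist_le_of_mem_dist hA0
      · rintro x ⟨t, rfl⟩
        exact ⟨g (lam t), mem_range_self _, by simpa [dist_eq_norm] using hA t⟩
      · rintro y ⟨u, rfl⟩
        obtain ⟨t, rfl⟩ := hbij.surjective u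
        refine ⟨f t, mem_range_self _, ?_⟩
        rw [dist_eq_norm, norm_sub_rev]
        exact hA t
    have hc : ∀ s : Set (EuclideanSpace ℝ (Fin d)),
        closure (convexHull ℝ (closure s)) = closure (convexHull ℝ s) := by
      intro s
      apply Subset.antisymm
      · have : convexHull ℝ (closure s) ⊆ closure (convexHull ℝ s) :=
          convexHull_min (closure_mono (subset_convexHull ℝ s))
            ((convex_convexHull ℝ s).closure)
        simpa using closure_mono this
      · exact closure_mono (convexHull_mono subset_closure)
    have h3 : hausdorffDist (convexHull ℝ (Set.range f)) (convexHull ℝ (Set.range g)) ≤ A := by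
      apply hausdorffDist_le_of_mem_dist hA0
      · intro x hx
        rw [mem_convexHull_iff_exists_fintype] at hx
        obtain ⟨ι, _, w, z, hw0, hw1, hz, rfl⟩ := hx
        choose ts hts using hz
        refine ⟨∑ i, w i • g (lam (ts i)),
          mem_convexHull_of_exists_fintype w _ hw0 hw1 (fun i => mem_range_self _) rfl, ?_⟩
        rw [dist_eq_norm, ← Finset.sum_sub_distrib]
        calc ‖∑ i, (w i • z i - w i • g (lam (ts i)))‖
            ≤ ∑ i, ‖w i • z i - w i • g (lam (ts i))‖ := norm_sum_le _ _
          _ ≤ ∑ i, w i * A := by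
              apply Finset.sum_le_sum; intro i _
              rw [← smul_sub, norm_smul, Real.norm_eq_abs, abs_of_nonneg (hw0 i), ← hts i]
              exact mul_le_mul_of_nonneg_left (hA (ts i)) (hw0 i)
          _ = A := by rw [← Finset.sum_mul, hw1, one_mul]
      · intro y hy
        rw [mem_convexHull_iff_exists_fintype] at hy
        obtain ⟨ι, _, w, z, hw0, hw1, hz, rfl⟩ := hy
        choose us hus using hz
        have hsurj : ∀ i, ∃ t, lam t = us i := fun i => hbij.surjective (us i)
        choose ts hts using hsurj
        refine ⟨∑ i, w i • f (ts i),
          mem_convexHull_of_exists_fintype w _ hw0 hw1 (fun i => mem_range_self _) rfl, ?_⟩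
        rw [dist_eq_norm, ← Finset.sum_sub_distrib]
        calc ‖∑ i, (w i • z i - w i • f (ts i))‖
            ≤ ∑ i, ‖w i • z i - w i • f (ts i)‖ := norm_sum_le _ _
          _ ≤ ∑ i, w i * A := by
              apply Finset.sum_le_sum; intro i _
              rw [← smul_sub, norm_smul, Real.norm_eq_abs, abs_of_nonneg (hw0 i),
                ← hus i, ← hts i, norm_sub_rev]
              exact mul_le_mul_of_nonneg_left (hA (ts i)) (hw0 i)
          _ = A := by rw [← Finset.sum_mul, hw1, one_mul]
    constructor
    · rw [hausdorffDist_closure]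
      linarith
    · have h2 : hausdorffDist (convexHull ℝ (closure (Set.range f)))
          (convexHull ℝ (closure (Set.range g)))
          = hausdorffDist (convexHull ℝ (Set.range f)) (convexHull ℝ (Set.range g)) := by
        rw [← hausdorffDist_closure, hc, hc, hausdorffDist_closure]
      rw [h2]
      linarith
  exact ⟨le_csInf hSne fun r hr => (key r hr).1, le_csInf hSne fun r hr => (key r hr).2⟩
end

section
/- Let α > 1 and let a_n = n^{1/α − 1} (taking slowly varying function ℓ ≡ 1, so b_n = n^{1/α}). For every m ≥ 1, the m-fold convolution partial sums satisfy lim_{n→∞} (1/n^{m/α}) Σ_{k=m}^n a^{*m}_k = α Γ(1/α)^m / (m Γ(m/α)), where a^{*m} is the m-fold convolution of the sequence (a_n) with itself, (x*y)_n = Σ_{j=0}^n x_j y_{n−j} (with a_0 := 0). -/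
open Filter

/-- Convolution of two real sequences: `(x*y)_n = Σ_{j=0}^n x_j y_{n−j}`. -/
noncomputable def seqConv (x y : ℕ → ℝ) (n : ℕ) : ℝ :=
  ∑ j ∈ Finset.range (n + 1), x j * y (n - j)

/-- The `m`-fold convolution power of a sequence (`convPow a 1 = a`,
`convPow a (k+1) = a * convPow a k`; `convPow a 0` is the convolution identity `δ_0`). -/
noncomputable def convPow (a : ℕ → ℝ) : ℕ → ℕ → ℝ
  | 0 => fun n => if n = 0 then 1 else 0
  | (k + 1) => seqConv a (convPow a k)

/-!
With `p = 1 / α` the sequence `a` is `n ↦ n ^ (p - 1)`, and convolving with it raises the growth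
exponent by `p` at the cost of a Beta factor: if `x k ~ c k ^ (q - 1)` then
`(a * x) n ~ c B(p, q) n ^ (p + q - 1)`. Indeed `n ^ (1 - p - q) (a * x) n` is a Riemann sum of
`t ^ (p - 1) (1 - t) ^ (q - 1)` weighted by `x (n - j) / (n - j) ^ (q - 1) → c`; as the integral
of a step function on `(0, 1)` it converges by dominated convergence, a multiple of the Beta
integrand dominating it when `p ≤ 1`. Induction on `m` with `B(p, q) = Γ(p) Γ(q) / Γ(p + q)` gives
`a^{*m} k ~ Γ(p) ^ m / Γ(m p) k ^ (m p - 1)`, and the partial sums are the convolution with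
`k ↦ 1` (`k ≥ 1`), the case `p = 1` in which `B(1, q) = 1 / q`.
-/

open MeasureTheory Set Topology ProbabilityTheory

lemma ofReal_rpow_mul_one_sub_rpow {p q t : ℝ} (ht : t ∈ Icc 0 1) :
    ((t ^ (p - 1) * (1 - t) ^ (q - 1) : ℝ) : ℂ) =
      (t : ℂ) ^ ((p : ℂ) - 1) * (1 - (t : ℂ)) ^ ((q : ℂ) - 1) := by
  rw [Complex.ofReal_mul, Complex.ofReal_cpow ht.1, Complex.ofReal_cpow (sub_nonneg.2 ht.2)]
  push_cast; rfl

lemma integrableOn_rpow_mul_one_sub_rpow {p q : ℝ} (hp : 0 < p) (hq : 0 < q) :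
    IntegrableOn (fun t : ℝ => t ^ (p - 1) * (1 - t) ^ (q - 1)) (Ioc 0 1) := by
  have h : IntegrableOn (fun t : ℝ => ((t : ℂ) ^ ((p : ℂ) - 1) * (1 - (t : ℂ)) ^ ((q : ℂ) - 1)))
      (Ioc 0 1) := (Complex.betaIntegral_convergent (u := p) (v := q) (by simpa) (by simpa)).1
  refine IntegrableOn.congr_fun h.re (fun t ht => ?_) measurableSet_Ioc
  simp [← ofReal_rpow_mul_one_sub_rpow (Ioc_subset_Icc_self ht)]

lemma integral_rpow_mul_one_sub_rpow {p q : ℝ} (hp : 0 < p) (hq : 0 < q) :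
    ∫ t in Ioc 0 1, t ^ (p - 1) * (1 - t) ^ (q - 1) = beta p q := by
  rw [beta_eq_betaIntegralReal p q hp hq, Complex.betaIntegral,
    intervalIntegral.integral_of_le zero_le_one, ← RCLike.re_to_complex, ← integral_re]
  · refine setIntegral_congr_fun measurableSet_Ioc fun t ht => ?_
    simp [← ofReal_rpow_mul_one_sub_rpow (Ioc_subset_Icc_self ht)]
  · exact (Complex.betaIntegral_convergent (u := p) (v := q) (by simpa) (by simpa)).1

lemma natCeil_eqOn_Ioc (k : ℕ) : EqOn (fun s : ℝ => ⌈s⌉₊) (fun _ => k + 1) (Ioc k (k + 1)) :=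
  fun s hs => (Nat.ceil_eq_iff k.succ_ne_zero).2 (by simpa using hs)

lemma intervalIntegral_comp_natCeil (g : ℕ → ℝ) (n : ℕ) :
    ∫ s in (0 : ℝ)..n, g ⌈s⌉₊ = ∑ k ∈ Finset.range n, g (k + 1) := by
  have hpiece (k : ℕ) : EqOn (fun s : ℝ => g ⌈s⌉₊) (fun _ => g (k + 1)) (Ioc k (k + 1)) :=
    fun s hs => congrArg g (natCeil_eqOn_Ioc k hs)
  have hint (k : ℕ) (_ : k < n) :
      IntervalIntegrable (fun s : ℝ => g ⌈s⌉₊) volume (k : ℝ) ((k + 1 : ℕ) : ℝ) := by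
    rw [intervalIntegrable_iff_integrableOn_Ioc_of_le (by simp), Nat.cast_succ]
    exact (integrableOn_const measure_Ioc_lt_top.ne).congr_fun (hpiece k).symm measurableSet_Ioc
  rw [← Nat.cast_zero, ← intervalIntegral.sum_integral_adjacent_intervals hint]
  refine Finset.sum_congr rfl fun k _ => ?_
  rw [intervalIntegral.integral_of_le (by simp), Nat.cast_succ,
    setIntegral_congr_fun measurableSet_Ioc (hpiece k)]
  simp

lemma integral_Ioc_comp_natCeil_mul (g : ℕ → ℝ) {n : ℕ} (hn : n ≠ 0) :
    ∫ t in Ioc (0 : ℝ) 1, g ⌈t * n⌉₊ = (∑ k ∈ Finset.range n, g (k + 1)) / n := by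
  rw [← intervalIntegral.integral_of_le zero_le_one,
    intervalIntegral.integral_comp_mul_right (fun s => g ⌈s⌉₊) (Nat.cast_ne_zero.2 hn)]
  simp [intervalIntegral_comp_natCeil, div_eq_inv_mul]

lemma rpow_le_two_rpow_abs_mul_rpow {s x e : ℝ} (hx : 0 < x) (hxs : x / 2 ≤ s) (hsx : s ≤ x) :
    s ^ e ≤ 2 ^ |e| * x ^ e := by
  rcases le_or_gt 0 e with he | he
  · calc s ^ e ≤ x ^ e := Real.rpow_le_rpow (by linarith) hsx he
      _ ≤ 2 ^ |e| * x ^ e :=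
        le_mul_of_one_le_left (by positivity) (Real.one_le_rpow one_le_two (abs_nonneg e))
  · calc s ^ e ≤ (x / 2) ^ e := Real.rpow_le_rpow_of_nonpos (by positivity) hxs he.le
      _ = 2 ^ |e| * x ^ e := by
        rw [abs_of_neg he, Real.div_rpow hx.le zero_le_two, Real.rpow_neg zero_le_two]
        ring

section CeilGrid

variable {t : ℝ} {n : ℕ}

lemma natCeil_mul_div_bounds (ht : t ∈ Ioo 0 1) (hn : ⌈t * n⌉₊ < n) :
    t ≤ (⌈t * n⌉₊ : ℝ) / n ∧ (1 - t) / 2 ≤ ((n - ⌈t * n⌉₊ : ℕ) : ℝ) / n ∧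
      ((n - ⌈t * n⌉₊ : ℕ) : ℝ) / n ≤ 1 - t := by
  have hn0 : (0 : ℝ) < n := by exact_mod_cast (Nat.zero_le _).trans_lt hn
  have hle : t * n ≤ ⌈t * n⌉₊ := Nat.le_ceil _
  have hlt : (⌈t * n⌉₊ : ℝ) < t * n + 1 := Nat.ceil_lt_add_one (mul_nonneg ht.1.le hn0.le)
  have hone : (1 : ℝ) ≤ ((n - ⌈t * n⌉₊ : ℕ) : ℝ) := by exact_mod_cast Nat.sub_pos_of_lt hn
  rw [Nat.cast_sub hn.le] at hone ⊢
  refine ⟨?_, ?_, ?_⟩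
  · rw [le_div_iff₀ hn0]; exact hle
  · rw [div_le_div_iff₀ two_pos hn0]; linarith
  · rw [div_le_iff₀ hn0]; linarith

lemma natCeil_div_rpow_mul_rpow_le {p q : ℝ} (hp : p ≤ 1) (ht : t ∈ Ioo 0 1) (hn : ⌈t * n⌉₊ < n) :
    ((⌈t * n⌉₊ : ℝ) / n) ^ (p - 1) * (((n - ⌈t * n⌉₊ : ℕ) : ℝ) / n) ^ (q - 1) ≤
      2 ^ |q - 1| * (t ^ (p - 1) * (1 - t) ^ (q - 1)) := by
  obtain ⟨hleft, hhalf, hright⟩ := natCeil_mul_div_bounds ht hn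
  calc _ ≤ t ^ (p - 1) * (2 ^ |q - 1| * (1 - t) ^ (q - 1)) :=
        mul_le_mul (Real.rpow_le_rpow_of_nonpos ht.1 hleft (by linarith))
          (rpow_le_two_rpow_abs_mul_rpow (by linarith [ht.2]) hhalf hright)
          (by positivity) (Real.rpow_nonneg ht.1.le _)
    _ = _ := by ring

lemma tendsto_natCeil_mul_div (ht : 0 ≤ t) :
    Tendsto (fun n : ℕ => (⌈t * n⌉₊ : ℝ) / n) atTop (𝓝 t) :=
  (tendsto_nat_ceil_mul_div_atTop ht).comp tendsto_natCast_atTop_atTop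

lemma eventually_natCeil_mul_mem_Ioo (ht : t ∈ Ioo 0 1) :
    ∀ᶠ n : ℕ in atTop, ⌈t * n⌉₊ ∈ Finset.Ioo 0 n := by
  filter_upwards [(tendsto_natCeil_mul_div ht.1.le).eventually (gt_mem_nhds ht.2),
    eventually_gt_atTop 0] with n hlt hn
  have hn0 : (0 : ℝ) < n := by exact_mod_cast hn
  rw [div_lt_one hn0, Nat.cast_lt] at hlt
  exact Finset.mem_Ioo.2 ⟨Nat.ceil_pos.2 (by positivity [ht.1]), hlt⟩

lemma tendsto_sub_natCeil_mul (ht : t ∈ Ioo 0 1) :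
    Tendsto (fun n : ℕ => n - ⌈t * n⌉₊) atTop atTop := by
  rw [← tendsto_natCast_atTop_iff (R := ℝ)]
  have hlin : Tendsto (fun n : ℕ => (1 - t) * n - 1) atTop atTop :=
    tendsto_atTop_add_const_right _ _
      (tendsto_natCast_atTop_atTop.const_mul_atTop (by linarith [ht.2]))
  refine tendsto_atTop_mono' _ ?_ hlin
  filter_upwards [eventually_natCeil_mul_mem_Ioo ht] with n hn
  have hlt : (⌈t * n⌉₊ : ℝ) < t * n + 1 := Nat.ceil_lt_add_one (by positivity [ht.1])
  rw [Nat.cast_sub (Finset.mem_Ioo.1 hn).2.le]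
  linarith

lemma tendsto_rpow_natCeil_mul_div {p q c : ℝ} {h : ℕ → ℝ} (hh : Tendsto h atTop (𝓝 c))
    (ht : t ∈ Ioo 0 1) :
    Tendsto (fun n : ℕ => ((⌈t * n⌉₊ : ℝ) / n) ^ (p - 1) *
        (((n - ⌈t * n⌉₊ : ℕ) : ℝ) / n) ^ (q - 1) * h (n - ⌈t * n⌉₊))
      atTop (𝓝 (t ^ (p - 1) * (1 - t) ^ (q - 1) * c)) := by
  have hleft := tendsto_natCeil_mul_div ht.1.le
  have hright : Tendsto (fun n : ℕ => ((n - ⌈t * n⌉₊ : ℕ) : ℝ) / n) atTop (𝓝 (1 - t)) := by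
    refine (tendsto_const_nhds.sub hleft).congr' ?_
    filter_upwards [eventually_natCeil_mul_mem_Ioo ht] with n hn
    obtain ⟨hj0, hjn⟩ := Finset.mem_Ioo.1 hn
    have hn0 : (n : ℝ) ≠ 0 := by exact_mod_cast (hj0.trans hjn).ne'
    rw [Nat.cast_sub hjn.le]
    field_simp
  exact (((Real.continuousAt_rpow_const _ (p - 1) (Or.inl ht.1.ne')).tendsto.comp hleft).mul
    ((Real.continuousAt_rpow_const _ (q - 1) (Or.inl (sub_pos.2 ht.2).ne')).tendsto.comp
      hright)).mul (hh.comp (tendsto_sub_natCeil_mul ht))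

end CeilGrid

theorem tendsto_betaRiemannSum {p q c : ℝ} (hp : 0 < p) (hp1 : p ≤ 1) (hq : 0 < q) {h : ℕ → ℝ}
    (hh : Tendsto h atTop (𝓝 c)) :
    Tendsto (fun n : ℕ => (∑ j ∈ Finset.Ioo 0 n,
        ((j : ℝ) / n) ^ (p - 1) * (((n - j : ℕ) : ℝ) / n) ^ (q - 1) * h (n - j)) / n)
      atTop (𝓝 (c * beta p q)) := by
  obtain ⟨M, hM⟩ : ∃ M, ∀ k, |h k| ≤ M := by
    obtain ⟨M, hM⟩ := hh.abs.bddAbove_range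
    exact ⟨M, fun k => hM (Set.mem_range_self k)⟩
  set g : ℕ → ℕ → ℝ := fun n j => if j ∈ Finset.Ioo 0 n then
    ((j : ℝ) / n) ^ (p - 1) * (((n - j : ℕ) : ℝ) / n) ^ (q - 1) * h (n - j) else 0 with hg
  have hsum : ∀ᶠ n : ℕ in atTop, ∫ t in Ioo (0 : ℝ) 1, g n ⌈t * n⌉₊ = (∑ j ∈ Finset.Ioo 0 n,
      ((j : ℝ) / n) ^ (p - 1) * (((n - j : ℕ) : ℝ) / n) ^ (q - 1) * h (n - j)) / n := by
    filter_upwards [eventually_ne_atTop 0] with n hn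
    rw [← integral_Ioc_eq_integral_Ioo, integral_Ioc_comp_natCeil_mul (g n) hn,
      ← add_zero (∑ k ∈ Finset.range n, g n (k + 1)), show (0 : ℝ) = g n 0 by simp [hg],
      ← Finset.sum_range_succ', hg, Finset.sum_ite_mem,
      Finset.inter_eq_right.2 fun j hj => by simp at hj ⊢; omega]
  have hmeas (n : ℕ) :
      AEStronglyMeasurable (fun t : ℝ => g n ⌈t * n⌉₊) (volume.restrict (Ioo 0 1)) :=
    ((Measurable.of_discrete (f := g n)).comp
      (Nat.measurable_ceil.comp (measurable_mul_const _))).aestronglyMeasurable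
  have hbound (n : ℕ) : ∀ᵐ t : ℝ ∂(volume.restrict (Ioo (0 : ℝ) 1)),
      ‖g n ⌈t * n⌉₊‖ ≤ M * 2 ^ |q - 1| * (t ^ (p - 1) * (1 - t) ^ (q - 1)) := by
    filter_upwards [ae_restrict_mem measurableSet_Ioo] with t ht
    by_cases hj : ⌈t * n⌉₊ ∈ Finset.Ioo 0 n
    · simp only [hg, if_pos hj]
      rw [Real.norm_eq_abs, abs_mul, abs_of_nonneg (by positivity)]
      refine (mul_le_mul (natCeil_div_rpow_mul_rpow_le hp1 ht (Finset.mem_Ioo.1 hj).2) (hM _)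
        (abs_nonneg _) (by positivity [ht.1, ht.2])).trans_eq (by ring)
    · have hM0 : 0 ≤ M := (abs_nonneg _).trans (hM 0)
      simp only [hg, if_neg hj, norm_zero]
      exact mul_nonneg (by positivity) (by positivity [ht.1, ht.2])
  have hlim : ∀ᵐ t : ℝ ∂(volume.restrict (Ioo (0 : ℝ) 1)),
      Tendsto (fun n : ℕ => g n ⌈t * n⌉₊) atTop (𝓝 (t ^ (p - 1) * (1 - t) ^ (q - 1) * c)) := by
    filter_upwards [ae_restrict_mem measurableSet_Ioo] with t ht
    refine (tendsto_rpow_natCeil_mul_div hh ht).congr' ?_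
    filter_upwards [eventually_natCeil_mul_mem_Ioo ht] with n hn
    simp only [hg, if_pos hn]
  have hdom := tendsto_integral_of_dominated_convergence _ hmeas
    (((integrableOn_rpow_mul_one_sub_rpow hp hq).mono_set Ioo_subset_Ioc_self).const_mul _)
    hbound hlim
  rw [integral_mul_const, ← integral_Ioc_eq_integral_Ioo, integral_rpow_mul_one_sub_rpow hp hq,
    mul_comm] at hdom
  exact hdom.congr' hsum

theorem tendsto_seqConv_div_rpow {p q c : ℝ} (hp : 0 < p) (hp1 : p ≤ 1) (hq : 0 < q)
    {u x : ℕ → ℝ} (hu : ∀ n, u n = if n = 0 then 0 else (n : ℝ) ^ (p - 1)) (hx0 : x 0 = 0)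
    (hx : Tendsto (fun k : ℕ => x k / (k : ℝ) ^ (q - 1)) atTop (𝓝 c)) :
    Tendsto (fun n : ℕ => seqConv u x n / (n : ℝ) ^ (p + q - 1)) atTop (𝓝 (c * beta p q)) := by
  refine (tendsto_betaRiemannSum hp hp1 hq hx).congr' ?_
  filter_upwards [eventually_ne_atTop 0] with n hn
  have hn0 : (0 : ℝ) < n := by positivity
  have hsupp : seqConv u x n = ∑ j ∈ Finset.Ioo 0 n, (j : ℝ) ^ (p - 1) * x (n - j) := by
    rw [seqConv, ← Finset.sum_subset (s₁ := Finset.Ioo 0 n) fun j hj => by simp at hj ⊢; omega]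
    · exact Finset.sum_congr rfl fun j hj => by
        rw [hu, if_neg (Finset.mem_Ioo.1 hj).1.ne']
    · intro j hjn hj
      rcases Nat.eq_zero_or_pos j with rfl | hj0
      · simp [hu]
      · simp [show n - j = 0 by simp at hjn hj; omega, hx0]
  rw [hsupp, Finset.sum_div, Finset.sum_div]
  refine Finset.sum_congr rfl fun j hj => ?_
  obtain ⟨hj0, hjn⟩ := Finset.mem_Ioo.1 hj
  have hj0' : (0 : ℝ) < j := by exact_mod_cast hj0
  have hk0 : (0 : ℝ) < ((n - j : ℕ) : ℝ) := by exact_mod_cast Nat.sub_pos_of_lt hjn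
  rw [Real.div_rpow hj0'.le hn0.le, Real.div_rpow hk0.le hn0.le,
    show p + q - 1 = (p - 1) + (q - 1) + 1 by ring, Real.rpow_add hn0, Real.rpow_add hn0,
    Real.rpow_one]
  field_simp

lemma seqConv_ite_eq_sum_range (x : ℕ → ℝ) (n : ℕ) :
    seqConv (fun k => if k = 0 then 0 else 1) x n = ∑ k ∈ Finset.range n, x k := by
  rw [seqConv, Finset.sum_range_succ', ← Finset.sum_range_reflect]
  simp only [add_eq_zero, one_ne_zero, and_false, if_false, one_mul, if_true, zero_mul, add_zero]
  exact Finset.sum_congr rfl fun k hk => congrArg x (by simp at hk; omega)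

theorem tendsto_sum_range_div_rpow {q c : ℝ} (hq : 0 < q) {x : ℕ → ℝ} (hx0 : x 0 = 0)
    (hx : Tendsto (fun k : ℕ => x k / (k : ℝ) ^ (q - 1)) atTop (𝓝 c)) :
    Tendsto (fun n : ℕ => (∑ k ∈ Finset.range (n + 1), x k) / (n : ℝ) ^ q) atTop (𝓝 (c / q)) := by
  have hconv := tendsto_seqConv_div_rpow one_pos le_rfl hq
    (u := fun k => if k = 0 then 0 else 1) (fun k => by simp) hx0 hx
  have hlast : Tendsto (fun n : ℕ => x n / (n : ℝ) ^ q) atTop (𝓝 0) := by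
    refine (mul_zero c ▸ hx.mul tendsto_inv_atTop_nhds_zero_nat).congr' ?_
    filter_upwards [eventually_ne_atTop 0] with n hn
    rw [← div_eq_mul_inv, div_div, ← Real.rpow_add_one (by positivity)]
    ring_nf
  have hbeta : beta 1 q = 1 / q := by
    rw [beta, Real.Gamma_one, add_comm, Real.Gamma_add_one hq.ne']
    field_simp
  rw [add_sub_cancel_left, hbeta] at hconv
  refine (add_zero (c / q) ▸ mul_one_div c q ▸ hconv.add hlast).congr fun n => ?_
  rw [seqConv_ite_eq_sum_range, Finset.sum_range_succ, add_div]

lemma convPow_one (a : ℕ → ℝ) : convPow a 1 = a := by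
  funext n
  rw [convPow, seqConv, Finset.sum_eq_single_of_mem n (Finset.self_mem_range_succ n)]
  · simp [convPow]
  · intro j hj hjn
    simp [convPow, show n - j ≠ 0 by simp at hj; omega]

lemma convPow_apply_of_lt {a : ℕ → ℝ} (ha0 : a 0 = 0) {m k : ℕ} (hk : k < m) :
    convPow a m k = 0 := by
  induction m generalizing k with
  | zero => omega
  | succ m ih =>
    rw [convPow, seqConv]
    refine Finset.sum_eq_zero fun j hj => ?_
    rcases Nat.eq_zero_or_pos j with rfl | hj0
    · rw [ha0, zero_mul]
    · rw [ih (by have := Finset.mem_range.1 hj; omega), mul_zero]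

theorem tendsto_convPow_div_rpow {p : ℝ} (hp : 0 < p) (hp1 : p ≤ 1) {a : ℕ → ℝ}
    (ha : ∀ n, a n = if n = 0 then 0 else (n : ℝ) ^ (p - 1)) {m : ℕ} (hm : 1 ≤ m) :
    Tendsto (fun k : ℕ => convPow a m k / (k : ℝ) ^ (m * p - 1)) atTop
      (𝓝 (Real.Gamma p ^ m / Real.Gamma (m * p))) := by
  induction m, hm using Nat.le_induction with
  | base =>
    refine tendsto_const_nhds.congr' ?_
    filter_upwards [eventually_ne_atTop 0] with k hk
    rw [convPow_one, ha, if_neg hk, Nat.cast_one, one_mul, pow_one, div_self, div_self]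
    all_goals positivity [Real.Gamma_pos_of_pos hp]
  | succ m hm ih =>
    have hmp : 0 < m * p := by positivity
    have hstep := tendsto_seqConv_div_rpow hp hp1 hmp ha
      (convPow_apply_of_lt (by rw [ha, if_pos rfl]) (by omega)) ih
    rw [beta, show p + m * p = (m + 1 : ℕ) * p by push_cast; ring] at hstep
    have hΓ : Real.Gamma (m * p) ≠ 0 := (Real.Gamma_pos_of_pos hmp).ne'
    rwa [div_mul_div_comm, ← mul_assoc, mul_comm (Real.Gamma (m * p)), mul_div_mul_right _ _ hΓ,
      ← pow_succ] at hstep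

/-- For `α > 1` and `a_n = n^{1/α − 1}` (with `a_0 = 0`), the `m`-fold convolution partial sums
satisfy `lim_n n^{-m/α} Σ_{k=m}^n a^{*m}_k = α Γ(1/α)^m / (m Γ(m/α))`. -/
theorem convPow_partial_sums_limit (α : ℝ) (hα : 1 < α) (m : ℕ) (hm : 1 ≤ m)
    (a : ℕ → ℝ) (ha : ∀ n : ℕ, a n = if n = 0 then 0 else (n : ℝ) ^ (1 / α - 1)) :
    Tendsto (fun n : ℕ => ((n : ℝ) ^ ((m : ℝ) / α))⁻¹ * ∑ k ∈ Finset.Icc m n, convPow a m k)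
      atTop (nhds (α * Real.Gamma (1 / α) ^ m / (m * Real.Gamma ((m : ℝ) / α)))) := by
  have hα0 : 0 < α := by linarith
  have hconv := tendsto_convPow_div_rpow (by positivity) ((div_le_one hα0).2 hα.le) ha hm
  rw [mul_one_div] at hconv
  have ha0 : a 0 = 0 := by rw [ha, if_pos rfl]
  have hsum := tendsto_sum_range_div_rpow (by positivity) (convPow_apply_of_lt ha0 hm) hconv
  have hIcc (n : ℕ) : ∑ k ∈ Finset.Icc m n, convPow a m k =
      ∑ k ∈ Finset.range (n + 1), convPow a m k :=
    Finset.sum_subset (fun k hk => by simp at hk ⊢; omega) fun k hkn hk =>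
      convPow_apply_of_lt ha0 (by simp at hkn hk; omega)
  have hval : Real.Gamma (1 / α) ^ m / Real.Gamma (m / α) / (m / α) =
      α * Real.Gamma (1 / α) ^ m / (m * Real.Gamma (m / α)) := by
    field_simp
  rw [hval] at hsum
  simpa only [hIcc, inv_mul_eq_div] using hsum
end

section
/- Let a_n = Σ_{j_1+⋯+j_d ≤ n, j_i ≥ 1} √(j_1+⋯+j_d)/√(j_1⋯j_d). Then lim_{n→∞} a_n / n^{(d+1)/2} = 2π^{d/2} / ((d+1)Γ(d/2)). -/
/-!
Write `T_d(k) = ∑ 1 / √(j₁ ⋯ j_d)` over the compositions `j₁ + ⋯ + j_d = k` into positive parts,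
so that `a_n = ∑_{k ≤ n} √k T_d(k)`. Splitting off the last part gives the convolution
`T_{d+1}(n) = ∑_m (n - m)^{-1/2} T_d(m)`, a Riemann sum for the Beta integral `B(d/2, 1/2)` weighted
by `T_d(m) / m^{d/2-1}`. By a Toeplitz-type averaging argument, induction on `d` gives
`T_d(k) ~ π^{d/2} / Γ(d/2) · k^{d/2-1}`, the constants multiplying up through
`B(d/2, 1/2) = Γ(d/2) √π / Γ((d+1)/2)`. The same argument with the Riemann sums of `x^{(d-1)/2}`
then gives `a_n ~ π^{d/2} / Γ(d/2) · n^{(d+1)/2} / ((d+1)/2)`.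
-/

open Filter Finset MeasureTheory intervalIntegral Topology

noncomputable def betaKernel (a b x : ℝ) : ℝ := x ^ (a - 1) * (1 - x) ^ (b - 1)

section BetaKernel

variable {a b : ℝ}

lemma betaKernel_nonneg {x : ℝ} (hx : x ∈ Set.Icc (0 : ℝ) 1) : 0 ≤ betaKernel a b x :=
  mul_nonneg (Real.rpow_nonneg hx.1 _) (Real.rpow_nonneg (sub_nonneg.2 hx.2) _)

lemma ofReal_betaKernel {x : ℝ} (hx : x ∈ Set.Icc (0 : ℝ) 1) :
    (betaKernel a b x : ℂ) = (x : ℂ) ^ ((a : ℂ) - 1) * (1 - (x : ℂ)) ^ ((b : ℂ) - 1) := by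
  push_cast [betaKernel, Complex.ofReal_cpow hx.1, Complex.ofReal_cpow (sub_nonneg.2 hx.2)]
  rfl

lemma intervalIntegrable_betaKernel (ha : 0 < a) (hb : 0 < b) :
    IntervalIntegrable (betaKernel a b) volume 0 1 := by
  refine (Complex.betaIntegral_convergent (u := a) (v := b) (by simpa) (by simpa)).norm.congr
    fun x hx => ?_
  have hx' : x ∈ Set.Icc (0 : ℝ) 1 := Set.Ioc_subset_Icc_self (by simpa using hx)
  simp only [← ofReal_betaKernel hx', Complex.norm_real, Real.norm_eq_abs]
  exact abs_of_nonneg (betaKernel_nonneg hx')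

lemma integral_betaKernel (ha : 0 < a) (hb : 0 < b) :
    ∫ x in (0 : ℝ)..1, betaKernel a b x = Real.Gamma a * Real.Gamma b / Real.Gamma (a + b) := by
  have key := Complex.Gamma_mul_Gamma_eq_betaIntegral (s := a) (t := b) (by simpa) (by simpa)
  rw [Complex.betaIntegral, ← intervalIntegral.integral_congr (fun x hx =>
    ofReal_betaKernel (a := a) (b := b) (by simpa using hx)), integral_ofReal,
    ← Complex.ofReal_add, Complex.Gamma_ofReal, Complex.Gamma_ofReal, Complex.Gamma_ofReal] at key
  rw [eq_div_iff (Real.Gamma_pos_of_pos (add_pos ha hb)).ne', mul_comm]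
  exact_mod_cast key.symm

lemma tendsto_mul_betaKernel_nhdsGT_zero (ha : 0 < a) :
    Tendsto (fun x => x * betaKernel a b x) (𝓝[>] 0) (𝓝 0) := by
  have hcont : ContinuousAt (fun x : ℝ => x ^ a * (1 - x) ^ (b - 1)) 0 :=
    (Real.continuousAt_rpow_const 0 a (Or.inr ha.le)).mul
      ((Real.continuousAt_rpow_const _ _ (Or.inl (by norm_num))).comp (by fun_prop))
  have h := hcont.tendsto.mono_left (nhdsWithin_le_nhds (s := Set.Ioi 0))
  rw [Real.zero_rpow ha.ne', zero_mul] at h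
  refine h.congr' (eventually_nhdsWithin_of_forall fun x (hx : 0 < x) => ?_)
  simp only [betaKernel, Real.rpow_sub_one hx.ne']
  field_simp

end BetaKernel

noncomputable def riemannSum (g : ℝ → ℝ) (n : ℕ) : ℝ := (∑ m ∈ range (n + 1), g (m / n)) / n

lemma riemannSum_add (f h : ℝ → ℝ) (n : ℕ) :
    riemannSum (fun x => f x + h x) n = riemannSum f n + riemannSum h n := by
  simp only [riemannSum, sum_add_distrib, add_div]

lemma riemannSum_succ (g : ℝ → ℝ) (n : ℕ) :
    riemannSum g (n + 1) =
      (g 0 + g 1) / (n + 1) + (∑ i ∈ range n, g ((i + 1) / (n + 1))) / (n + 1) := by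
  have hN : (n : ℝ) + 1 ≠ 0 := by positivity
  rw [riemannSum, sum_range_succ, sum_range_succ']
  push_cast
  rw [div_self hN, zero_div]
  ring

section RiemannSum

variable {g : ℝ → ℝ}

lemma MonotoneOn.integral_le_mul_le_integral (hg : MonotoneOn g (Set.Ioo 0 1))
    (hint : IntervalIntegrable g volume 0 1) {s t u : ℝ} (hs : 0 ≤ s) (hst : s ≤ t)
    (ht : t ∈ Set.Ioo (0 : ℝ) 1) (htu : t ≤ u) (hu : u ≤ 1) :
    ∫ x in s..t, g x ≤ (t - s) * g t ∧ (u - t) * g t ≤ ∫ x in t..u, g x := by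
  have hsub : ∀ {v w : ℝ}, 0 ≤ v → v ≤ w → w ≤ 1 → IntervalIntegrable g volume v w :=
    fun hv hvw hw => hint.mono_set (by
      rw [Set.uIcc_of_le zero_le_one]
      exact Set.uIcc_subset_Icc ⟨hv, by linarith⟩ ⟨by linarith, hw⟩)
  constructor
  · calc ∫ x in s..t, g x ≤ ∫ x in s..t, g t :=
          integral_mono_on_of_le_Ioo hst (hsub hs hst ht.2.le) intervalIntegrable_const
            fun x hx => hg ⟨hs.trans_lt hx.1, hx.2.trans ht.2⟩ ht hx.2.le
      _ = (t - s) * g t := by rw [intervalIntegral.integral_const, smul_eq_mul]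
  · calc (u - t) * g t = ∫ x in t..u, g t := by
          rw [intervalIntegral.integral_const, smul_eq_mul]
      _ ≤ ∫ x in t..u, g x :=
          integral_mono_on_of_le_Ioo htu intervalIntegrable_const (hsub ht.1.le htu hu)
            fun x hx => hg ht ⟨ht.1.trans hx.1, hx.2.trans_le hu⟩ hx.1.le

lemma MonotoneOn.integral_le_sum_le_integral (hg : MonotoneOn g (Set.Ioo 0 1))
    (hint : IntervalIntegrable g volume 0 1) (n : ℕ) :
    ∫ x in (0 : ℝ)..n / (n + 1), g x ≤ (∑ i ∈ range n, g ((i + 1) / (n + 1))) / (n + 1) ∧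
      (∑ i ∈ range n, g ((i + 1) / (n + 1))) / (n + 1) ≤ ∫ x in 1 / (n + 1)..1, g x := by
  set N : ℝ := n + 1
  have hN : 0 < N := by positivity
  have hpt : ∀ i ≤ n + 1, (i : ℝ) / N ≤ 1 := fun i hi =>
    (div_le_one hN).2 (by simp only [N]; exact_mod_cast hi)
  have hcell : ∀ i ≤ n, IntervalIntegrable g volume (i / N) ((i + 1 : ℕ) / N) := fun i hi =>
    hint.mono_set (by
      rw [Set.uIcc_of_le zero_le_one]
      exact Set.uIcc_subset_Icc ⟨by positivity, hpt i (by omega)⟩ ⟨by positivity, hpt _ (by omega)⟩)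
  have hbound : ∀ i < n,
      ∫ x in (i / N)..((i + 1 : ℕ) / N), g x ≤ g ((i + 1) / N) / N ∧
        g ((i + 1) / N) / N ≤ ∫ x in ((i + 1 : ℕ) / N)..((i + 1 + 1 : ℕ) / N), g x := by
    intro i hi
    have ht : ((i + 1 : ℕ) : ℝ) / N ∈ Set.Ioo 0 1 :=
      ⟨by positivity, (div_lt_one hN).2 (by simp only [N]; exact_mod_cast Nat.succ_lt_succ hi)⟩
    have h := hg.integral_le_mul_le_integral hint (s := i / N) (u := (i + 1 + 1 : ℕ) / N)
      (by positivity) (by gcongr; omega) ht (by gcongr; omega) (hpt _ (by omega))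
    have hwidth : ∀ j : ℕ, ((j + 1 : ℕ) : ℝ) / N - j / N = 1 / N := fun j => by push_cast; ring
    rw [hwidth, hwidth] at h
    push_cast at h ⊢
    rwa [one_div_mul_eq_div] at h
  rw [sum_div]
  constructor
  · calc ∫ x in (0 : ℝ)..n / N, g x = ∑ i ∈ range n, ∫ x in (i / N)..((i + 1 : ℕ) / N), g x := by
          rw [sum_integral_adjacent_intervals fun i hi => hcell i hi.le]; simp
      _ ≤ _ := sum_le_sum fun i hi => (hbound i (mem_range.1 hi)).1
  · calc _ ≤ ∑ i ∈ range n, ∫ x in ((i + 1 : ℕ) / N)..((i + 1 + 1 : ℕ) / N), g x :=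
          sum_le_sum fun i hi => (hbound i (mem_range.1 hi)).2
      _ = ∫ x in 1 / N..1, g x := by
          rw [sum_integral_adjacent_intervals (a := fun i : ℕ => ((i + 1 : ℕ) : ℝ) / N)
            fun i hi => hcell (i + 1) hi]
          simp [N, hN.ne']

lemma MonotoneOn.tendsto_riemannSum (hg : MonotoneOn g (Set.Ioo 0 1))
    (hint : IntervalIntegrable g volume 0 1) :
    Tendsto (riemannSum g) atTop (𝓝 (∫ x in (0 : ℝ)..1, g x)) := by
  set I := ∫ x in (0 : ℝ)..1, g x
  have hon : IntegrableOn g (Set.uIcc 0 1) := (intervalIntegrable_iff').1 hint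
  have hunit : ∀ {x : ℝ}, 0 ≤ x → x ≤ 1 → x ∈ Set.uIcc (0 : ℝ) 1 :=
    fun h0 h1 => Set.mem_uIcc.2 (Or.inl ⟨h0, h1⟩)
  have hlow : Tendsto (fun n : ℕ => ∫ x in (0 : ℝ)..n / (n + 1), g x) atTop (𝓝 I) :=
    ((continuousOn_primitive_interval hon) 1 Set.right_mem_uIcc).tendsto.comp <|
      tendsto_nhdsWithin_iff.2 ⟨tendsto_natCast_div_add_atTop 1, .of_forall fun n =>
        hunit (by positivity) ((div_le_one (by positivity)).2 (by linarith))⟩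
  have hup : Tendsto (fun n : ℕ => ∫ x in 1 / ((n : ℝ) + 1)..1, g x) atTop (𝓝 I) :=
    ((continuousOn_primitive_interval_left hon) 0 Set.left_mem_uIcc).tendsto.comp <|
      tendsto_nhdsWithin_iff.2 ⟨tendsto_one_div_add_atTop_nhds_zero_nat, .of_forall fun n =>
        hunit (by positivity) ((div_le_one (by positivity)).2 (by simp))⟩
  have hend : Tendsto (fun n : ℕ => (g 0 + g 1) / ((n : ℝ) + 1)) atTop (𝓝 0) := by
    simpa [div_eq_mul_inv] using tendsto_one_div_add_atTop_nhds_zero_nat.const_mul (g 0 + g 1)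
  rw [← tendsto_add_atTop_iff_nat 1]
  simp only [riemannSum_succ]
  refine tendsto_of_tendsto_of_tendsto_of_le_of_le (by simpa only [zero_add] using hend.add hlow)
    (by simpa only [zero_add] using hend.add hup) (fun n => ?_) (fun n => ?_)
  · exact add_le_add_right (hg.integral_le_sum_le_integral hint n).1 _
  · exact add_le_add_right (hg.integral_le_sum_le_integral hint n).2 _

lemma AntitoneOn.tendsto_riemannSum (hg : AntitoneOn g (Set.Ioo 0 1))
    (hint : IntervalIntegrable g volume 0 1) :
    Tendsto (riemannSum g) atTop (𝓝 (∫ x in (0 : ℝ)..1, g x)) := by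
  have h := (hg.neg.tendsto_riemannSum hint.neg).neg
  simp only [riemannSum, sum_neg_distrib, neg_div, intervalIntegral.integral_neg, neg_neg] at h
  exact h

lemma tendsto_riemannSum_of_antitoneOn_of_monotoneOn {c : ℝ} (hc : c ∈ Set.Ioo (0 : ℝ) 1)
    (hanti : AntitoneOn g (Set.Ioc 0 c)) (hmono : MonotoneOn g (Set.Ico c 1))
    (hint : IntervalIntegrable g volume 0 1) :
    Tendsto (riemannSum g) atTop (𝓝 (∫ x in (0 : ℝ)..1, g x)) := by
  -- a unimodal function is the sum of an antitone and a monotone one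
  set g₁ : ℝ → ℝ := fun x => g (min x c)
  set g₂ : ℝ → ℝ := fun x => g (max x c) - g c
  have hsplit : g = fun x => g₁ x + g₂ x := by
    ext x
    rcases le_total x c with h | h <;> simp [g₁, g₂, h]
  have hint₀ : IntervalIntegrable g volume 0 c := hint.mono_set (by
    rw [Set.uIcc_of_le hc.1.le, Set.uIcc_of_le zero_le_one]; exact Set.Icc_subset_Icc_right hc.2.le)
  have hint₁ : IntervalIntegrable g volume c 1 := hint.mono_set (by
    rw [Set.uIcc_of_le hc.2.le, Set.uIcc_of_le zero_le_one]; exact Set.Icc_subset_Icc_left hc.1.le)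
  have hg₁ : IntervalIntegrable g₁ volume 0 1 := by
    refine (hint₀.congr fun x hx => ?_).trans
      (intervalIntegrable_const (c := g c) |>.congr fun x hx => ?_)
    · rw [Set.uIoc_of_le hc.1.le] at hx; simp [g₁, hx.2]
    · rw [Set.uIoc_of_le hc.2.le] at hx; simp [g₁, hx.1.le]
  have hg₂ : IntervalIntegrable g₂ volume 0 1 := by
    refine (intervalIntegrable_const (c := (0 : ℝ)) |>.congr fun x hx => ?_).trans
      ((hint₁.sub (intervalIntegrable_const (c := g c))).congr fun x hx => ?_)
    · rw [Set.uIoc_of_le hc.1.le] at hx; simp [g₂, hx.2]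
    · rw [Set.uIoc_of_le hc.2.le] at hx; simp [g₂, hx.1.le]
  have hanti₁ : AntitoneOn g₁ (Set.Ioo 0 1) := fun x hx y hy hxy =>
    hanti ⟨lt_min hx.1 hc.1, min_le_right _ _⟩ ⟨lt_min hy.1 hc.1, min_le_right _ _⟩
      (min_le_min_right c hxy)
  have hmono₂ : MonotoneOn g₂ (Set.Ioo 0 1) := fun x hx y hy hxy =>
    sub_le_sub_right (hmono ⟨le_max_right _ _, max_lt hx.2 hc.2⟩
      ⟨le_max_right _ _, max_lt hy.2 hc.2⟩ (max_le_max_right c hxy)) _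
  rw [hsplit, integral_add hg₁ hg₂, funext (riemannSum_add g₁ g₂)]
  exact (hanti₁.tendsto_riemannSum hg₁).add (hmono₂.tendsto_riemannSum hg₂)

lemma tendsto_riemannSum_betaKernel {a b : ℝ} (hb : 0 < b) (hb1 : b ≤ 1) (ha : a = b ∨ 1 ≤ a) :
    Tendsto (riemannSum (betaKernel a b)) atTop
      (𝓝 (Real.Gamma a * Real.Gamma b / Real.Gamma (a + b))) := by
  have ha0 : 0 < a := by rcases ha with rfl | ha <;> linarith
  rw [← integral_betaKernel ha0 hb]
  have hb1' : b - 1 ≤ 0 := by linarith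
  rcases ha with rfl | ha
  · have hsymm : ∀ x ∈ Set.Icc (0 : ℝ) 1, betaKernel a a x = (x * (1 - x)) ^ (a - 1) :=
      fun x hx => (Real.mul_rpow hx.1 (sub_nonneg.2 hx.2)).symm
    refine tendsto_riemannSum_of_antitoneOn_of_monotoneOn (c := 1 / 2) ⟨by norm_num, by norm_num⟩
      (fun x hx y hy hxy => ?_) (fun x hx y hy hxy => ?_) (intervalIntegrable_betaKernel ha0 hb)
    · rw [hsymm x ⟨hx.1.le, by linarith [hx.2]⟩, hsymm y ⟨hy.1.le, by linarith [hy.2]⟩]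
      exact Real.rpow_le_rpow_of_nonpos (by nlinarith [hx.1, hy.2]) (by nlinarith [hy.2]) hb1'
    · rw [hsymm x ⟨by linarith [hx.1], hx.2.le⟩, hsymm y ⟨by linarith [hy.1], hy.2.le⟩]
      exact Real.rpow_le_rpow_of_nonpos (by nlinarith [hx.1, hy.2]) (by nlinarith [hx.1]) hb1'
  · refine MonotoneOn.tendsto_riemannSum (fun x hx y hy hxy => ?_)
      (intervalIntegrable_betaKernel ha0 hb)
    exact mul_le_mul (Real.rpow_le_rpow hx.1.le hxy (by linarith))
      (Real.rpow_le_rpow_of_nonpos (by linarith [hy.2]) (by linarith) hb1')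
      (Real.rpow_nonneg (by linarith [hx.2]) _) (Real.rpow_nonneg (hx.1.le.trans hxy) _)

lemma tendsto_riemannSum_rpow {p : ℝ} (hp : 0 ≤ p) :
    Tendsto (riemannSum fun x => x ^ p) atTop (𝓝 (1 / (p + 1))) := by
  have hint : ∫ x in (0 : ℝ)..1, x ^ p = 1 / (p + 1) := by
    rw [integral_rpow (Or.inl (by linarith)), Real.one_rpow, Real.zero_rpow (by linarith),
      sub_zero]
  rw [← hint]
  exact MonotoneOn.tendsto_riemannSum (fun x hx y _ hxy => Real.rpow_le_rpow hx.1.le hxy hp)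
    (intervalIntegrable_rpow' (by linarith))

lemma tendsto_mul_rpow_nhdsGT_zero {p : ℝ} (hp : 0 ≤ p) :
    Tendsto (fun x : ℝ => x * x ^ p) (𝓝[>] 0) (𝓝 0) := by
  have h : ContinuousAt (fun x : ℝ => x * x ^ p) 0 :=
    continuousAt_id.mul (Real.continuousAt_rpow_const 0 p (Or.inr hp))
  simpa using h.tendsto.mono_left nhdsWithin_le_nhds

end RiemannSum

lemma tendsto_sum_mul_sub_of_tendsto {s : ℕ → Finset ℕ} {W : ℕ → ℕ → ℝ} {u : ℕ → ℝ} {B L : ℝ}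
    (hW : ∀ n, ∀ k ∈ s n, 0 ≤ W n k) (hW0 : ∀ k, Tendsto (W · k) atTop (𝓝 0))
    (hB : Tendsto (fun n => ∑ k ∈ s n, W n k) atTop (𝓝 B)) (hu : Tendsto u atTop (𝓝 L)) :
    Tendsto (fun n => ∑ k ∈ s n, W n k * (u k - L)) atTop (𝓝 0) := by
  set C := |B| + 1
  have hC : 0 < C := by positivity
  rw [Metric.tendsto_nhds]
  intro ε hε
  obtain ⟨K, hK⟩ := Metric.tendsto_atTop.1 hu (ε / (2 * C)) (by positivity)
  have hhead : Tendsto (fun n => ∑ k ∈ range K, |W n k| * |u k - L|) atTop (𝓝 0) := by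
    simpa using tendsto_finsetSum (range K) fun k _ => (hW0 k).abs.mul_const |u k - L|
  filter_upwards [hhead.eventually (gt_mem_nhds (half_pos hε)),
    hB.eventually (gt_mem_nhds (show B < C by linarith [le_abs_self B]))] with n hhead_n hB_n
  have hsmall : ∑ k ∈ (s n).filter (· < K), |W n k| * |u k - L| < ε / 2 :=
    (sum_le_sum_of_subset_of_nonneg (fun k hk => mem_range.2 (mem_filter.1 hk).2)
      fun _ _ _ => by positivity).trans_lt hhead_n
  have hlarge : ∑ k ∈ (s n).filter (¬ · < K), |W n k| * |u k - L| ≤ ε / 2 :=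
    calc ∑ k ∈ (s n).filter (¬ · < K), |W n k| * |u k - L|
        ≤ ∑ k ∈ (s n).filter (¬ · < K), W n k * (ε / (2 * C)) := by
          refine sum_le_sum fun k hk => ?_
          rw [mem_filter, not_lt] at hk
          rw [abs_of_nonneg (hW n k hk.1)]
          exact mul_le_mul_of_nonneg_left (by simpa [Real.dist_eq] using (hK k hk.2).le)
            (hW n k hk.1)
      _ ≤ ∑ k ∈ s n, W n k * (ε / (2 * C)) := sum_le_sum_of_subset_of_nonneg (filter_subset _ _)
          fun k hk _ => mul_nonneg (hW n k hk) (by positivity)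
      _ ≤ C * (ε / (2 * C)) := by rw [← sum_mul]; gcongr
      _ = ε / 2 := by field_simp
  rw [Real.dist_0_eq_abs]
  calc |∑ k ∈ s n, W n k * (u k - L)|
      ≤ ∑ k ∈ s n, |W n k| * |u k - L| :=
        (abs_sum_le_sum_abs _ _).trans_eq (by simp only [abs_mul])
    _ = ∑ k ∈ (s n).filter (· < K), |W n k| * |u k - L| +
          ∑ k ∈ (s n).filter (¬ · < K), |W n k| * |u k - L| :=
        (sum_filter_add_sum_filter_not ..).symm
    _ < ε / 2 + ε / 2 := add_lt_add_of_lt_of_le hsmall hlarge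
    _ = ε := add_halves ε

-- Toeplitz's theorem for nonnegative weights.
lemma tendsto_sum_mul_of_tendsto {s : ℕ → Finset ℕ} {W : ℕ → ℕ → ℝ} {u : ℕ → ℝ} {B L : ℝ}
    (hW : ∀ n, ∀ k ∈ s n, 0 ≤ W n k) (hW0 : ∀ k, Tendsto (W · k) atTop (𝓝 0))
    (hB : Tendsto (fun n => ∑ k ∈ s n, W n k) atTop (𝓝 B)) (hu : Tendsto u atTop (𝓝 L)) :
    Tendsto (fun n => ∑ k ∈ s n, W n k * u k) atTop (𝓝 (B * L)) := by
  have := (tendsto_sum_mul_sub_of_tendsto hW hW0 hB hu).add (hB.mul_const L)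
  simp only [zero_add, mul_sub, sum_sub_distrib, sum_mul, sub_add_cancel] at this
  exact this

lemma tendsto_riemannSum_mul {g : ℝ → ℝ} {u : ℕ → ℝ} {I L : ℝ}
    (hg₀ : ∀ x ∈ Set.Icc (0 : ℝ) 1, 0 ≤ g x) (hg : Tendsto (fun x => x * g x) (𝓝[>] 0) (𝓝 0))
    (hR : Tendsto (riemannSum g) atTop (𝓝 I)) (hu : Tendsto u atTop (𝓝 L)) :
    Tendsto (fun n : ℕ => (∑ m ∈ range (n + 1), g (m / n) * u m) / n) atTop (𝓝 (I * L)) := by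
  have hW0 : ∀ m : ℕ, Tendsto (fun n : ℕ => g (m / n) / n) atTop (𝓝 0) := by
    intro m
    rcases Nat.eq_zero_or_pos m with rfl | hm
    · simpa using tendsto_const_div_atTop_nhds_zero_nat (g 0)
    have hm' : (m : ℝ) ≠ 0 := by positivity
    have hlim : Tendsto (fun n : ℕ => (m : ℝ) / n) atTop (𝓝[>] 0) :=
      tendsto_nhdsWithin_iff.2 ⟨tendsto_const_div_atTop_nhds_zero_nat _,
        eventually_atTop.2 ⟨1, fun n hn => by simp only [Set.mem_Ioi]; positivity⟩⟩
    have h := (hg.comp hlim).div_const (m : ℝ)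
    rw [zero_div] at h
    refine h.congr fun n => ?_
    simp only [Function.comp_apply]
    rw [mul_div_right_comm, div_div_cancel_left' hm', inv_mul_eq_div]
  have hsum : ∀ n : ℕ, (∑ m ∈ range (n + 1), g (m / n) * u m) / n =
      ∑ m ∈ range (n + 1), g (m / n) / n * u m := fun n => by
    rw [sum_div]; simp only [div_mul_eq_mul_div]
  simp only [hsum]
  refine tendsto_sum_mul_of_tendsto (fun n m hm => div_nonneg (hg₀ _ ?_) n.cast_nonneg) hW0
    (hR.congr fun n => by rw [riemannSum, sum_div]) hu
  exact ⟨by positivity, div_le_one_of_le₀ (by exact_mod_cast Nat.lt_succ_iff.1 (mem_range.1 hm))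
    n.cast_nonneg⟩

lemma Finset.Nat.sum_antidiagonalTuple_succ {M : Type*} [AddCommMonoid M] (d k : ℕ)
    (f : (Fin (d + 1) → ℕ) → M) :
    ∑ j ∈ antidiagonalTuple (d + 1) k, f j =
      ∑ p ∈ antidiagonal k, ∑ j ∈ antidiagonalTuple d p.2, f (Fin.cons p.1 j) := by
  rw [sum_sigma']
  refine sum_bij' (fun j _ => ⟨(j 0, k - j 0), Fin.tail j⟩) (fun x _ => Fin.cons x.1.1 x.2)
    (fun j hj => ?_) (fun x hx => ?_) (fun j _ => Fin.cons_self_tail j) (fun x hx => ?_)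
    (fun j _ => by simp)
  · rw [mem_antidiagonalTuple, Fin.sum_univ_succ] at hj
    simp only [mem_sigma, HasAntidiagonal.mem_antidiagonal, mem_antidiagonalTuple]
    simp [Fin.tail]; omega
  · simp only [mem_sigma, HasAntidiagonal.mem_antidiagonal, mem_antidiagonalTuple] at hx
    rw [mem_antidiagonalTuple, Fin.sum_univ_succ]
    simp; omega
  · simp only [mem_sigma, HasAntidiagonal.mem_antidiagonal, mem_antidiagonalTuple] at hx
    obtain ⟨⟨a, b⟩, j⟩ := x
    simp only at hx
    simp only [Fin.cons_zero, Fin.tail_cons, ← hx.1, Nat.add_sub_cancel_left]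

-- Since `(√0)⁻¹ = 0`, the tuples with a zero entry contribute nothing: this is the sum over the
-- compositions of `k` into `d` positive parts.
noncomputable def sumInvSqrtProd (d k : ℕ) : ℝ :=
  ∑ j ∈ Nat.antidiagonalTuple d k, ∏ i, (√(j i : ℝ))⁻¹

lemma sumInvSqrtProd_succ (d k : ℕ) :
    sumInvSqrtProd (d + 1) k =
      ∑ m ∈ range (k + 1), (√((k - m : ℕ) : ℝ))⁻¹ * sumInvSqrtProd d m := by
  rw [sumInvSqrtProd, Nat.sum_antidiagonalTuple_succ, ← Nat.sum_antidiagonal_swap,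
    Nat.sum_antidiagonal_eq_sum_range_succ_mk]
  refine sum_congr rfl fun m _ => ?_
  simp [sumInvSqrtProd, Fin.prod_univ_succ, mul_sum, mul_comm]

lemma sumInvSqrtProd_one (k : ℕ) : sumInvSqrtProd 1 k = (√k)⁻¹ := by
  simp [sumInvSqrtProd, Nat.antidiagonalTuple_one]

lemma sumInvSqrtProd_zero_right {d : ℕ} (hd : d ≠ 0) : sumInvSqrtProd d 0 = 0 := by
  obtain ⟨d, rfl⟩ := Nat.exists_eq_succ_of_ne_zero hd
  simp [sumInvSqrtProd, Nat.antidiagonalTuple_zero_right, Fin.prod_univ_succ]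

lemma sum_sqrt_sum_div_sqrt_prod_eq (d n : ℕ) :
    ∑ j ∈ (Fintype.piFinset fun _ : Fin d => Icc 1 n).filter (fun j => ∑ i, j i ≤ n),
        √(∑ i, (j i : ℝ)) / √(∏ i, (j i : ℝ)) =
      ∑ k ∈ range (n + 1), √k * sumInvSqrtProd d k := by
  set S := (Fintype.piFinset fun _ : Fin d => range (n + 1)).filter (fun j => ∑ i, j i ≤ n)
  have hentry : ∀ (j : Fin d → ℕ) i, j i ≤ ∑ i, j i := fun j i =>
    single_le_sum (fun i _ => Nat.zero_le (j i)) (mem_univ i)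
  have hfiber : ∀ k ∈ range (n + 1),
      S.filter (fun j => ∑ i, j i = k) = Nat.antidiagonalTuple d k := by
    intro k hk
    have hk := Nat.lt_succ_iff.1 (mem_range.1 hk)
    ext j
    simp only [S, mem_filter, Fintype.mem_piFinset, mem_range, Nat.mem_antidiagonalTuple]
    exact ⟨And.right, fun h => ⟨⟨fun i => by linarith [hentry j i], h ▸ hk⟩, h⟩⟩
  rw [sum_subset (s₂ := S) (fun j hj => ?_) (fun j hj hj' => ?_),
    ← sum_fiberwise_of_maps_to (s := S) (g := fun j => ∑ i, j i) (t := range (n + 1))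
      (fun j hj => mem_range.2 (Nat.lt_succ_of_le (mem_filter.1 hj).2))]
  · refine sum_congr rfl fun k hk => ?_
    rw [hfiber k hk, sumInvSqrtProd, mul_sum]
    refine sum_congr rfl fun j hj => ?_
    rw [← Nat.mem_antidiagonalTuple.1 hj, Real.sqrt_prod _ (fun i _ => Nat.cast_nonneg _),
      prod_inv_distrib, div_eq_mul_inv]
    push_cast; rfl
  · simp only [S, mem_filter, Fintype.mem_piFinset, mem_Icc, mem_range] at hj ⊢
    exact ⟨fun i => Nat.lt_succ_of_le (hj.1 i).2, hj.2⟩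
  · obtain ⟨i, hi⟩ : ∃ i, j i = 0 := by
      by_contra! h
      simp only [S, mem_filter, Fintype.mem_piFinset, mem_Icc, mem_range] at hj hj'
      exact hj' ⟨fun i => ⟨Nat.one_le_iff_ne_zero.2 (h i), (hentry j i).trans hj.2⟩, hj.2⟩
    rw [prod_eq_zero (mem_univ i) (by simp [hi]), Real.sqrt_zero, div_zero]

section Asymptotics

variable {a : ℝ}

lemma betaKernel_half_div_mul {m n : ℕ} (hm : 0 < m) (hmn : m ≤ n) (t : ℝ) :
    betaKernel a (1 / 2) (m / n) / n * (t / m ^ (a - 1)) =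
      (√((n - m : ℕ) : ℝ))⁻¹ * t / n ^ (a - 1 / 2) := by
  rcases hmn.eq_or_lt with rfl | hlt
  · have hm' : (m : ℝ) ≠ 0 := by positivity
    simp [betaKernel, div_self hm', Real.zero_rpow (show (2⁻¹ : ℝ) - 1 ≠ 0 by norm_num)]
  have hm' : (0 : ℝ) < m := by exact_mod_cast hm
  have hn' : (0 : ℝ) < n := by exact_mod_cast hm.trans hlt
  have hy : (0 : ℝ) < n - m := sub_pos.2 (by exact_mod_cast hlt)
  have hx : ((m : ℝ) / n) ^ (a - 1) = m ^ (a - 1) / n ^ (a - 1) := Real.div_rpow hm'.le hn'.le _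
  have h1 : (1 - (m : ℝ) / n) ^ ((1 / 2 : ℝ) - 1) = √n / √(n - m) := by
    rw [show 1 - (m : ℝ) / n = (n - m) / n by field_simp,
      show (1 / 2 : ℝ) - 1 = -(1 / 2) by norm_num, Real.rpow_neg (by positivity),
      ← Real.sqrt_eq_rpow, Real.sqrt_div hy.le, inv_div]
  have hN : (n : ℝ) ^ (a - 1 / 2) = n ^ (a - 1) * √n := by
    rw [show a - 1 / 2 = (a - 1) + 1 / 2 by ring, Real.rpow_add hn', Real.sqrt_eq_rpow]
  have : 0 < √((n : ℝ) - m) := Real.sqrt_pos.2 hy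
  have : 0 < √(n : ℝ) := Real.sqrt_pos.2 hn'
  have : 0 < (m : ℝ) ^ (a - 1) := Real.rpow_pos_of_pos hm' _
  have : 0 < (n : ℝ) ^ (a - 1) := Real.rpow_pos_of_pos hn' _
  rw [betaKernel, hx, h1, hN, Nat.cast_sub hmn]
  field_simp
  rw [Real.sq_sqrt hn'.le]

lemma rpow_sub_half_div_mul {k n : ℕ} (hk : 0 < k) (hn : 0 < n) (t : ℝ) :
    ((k : ℝ) / n) ^ (a - 1 / 2) / n * (t / k ^ (a - 1)) = √k * t / n ^ (a + 1 / 2) := by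
  have hk' : (0 : ℝ) < k := by exact_mod_cast hk
  have hn' : (0 : ℝ) < n := by exact_mod_cast hn
  have : 0 < (k : ℝ) ^ (a - 1) := Real.rpow_pos_of_pos hk' _
  have : 0 < (n : ℝ) ^ (a - 1 / 2) := Real.rpow_pos_of_pos hn' _
  have hk_pow : (k : ℝ) ^ (a - 1 / 2) = k ^ (a - 1) * √k := by
    rw [show a - 1 / 2 = (a - 1) + 1 / 2 by ring, Real.rpow_add hk', Real.sqrt_eq_rpow]
  have hn_pow : (n : ℝ) ^ (a + 1 / 2) = n ^ (a - 1 / 2) * n := by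
    rw [show a + 1 / 2 = (a - 1 / 2) + 1 by ring, Real.rpow_add_one hn'.ne']
  rw [Real.div_rpow hk'.le hn'.le, hk_pow, hn_pow]
  field_simp

lemma tendsto_sumInvSqrtProd_succ {d : ℕ} (hd : 1 ≤ d) {L : ℝ}
    (h : Tendsto (fun k : ℕ => sumInvSqrtProd d k / (k : ℝ) ^ ((d : ℝ) / 2 - 1)) atTop (𝓝 L)) :
    Tendsto (fun n : ℕ => sumInvSqrtProd (d + 1) n / (n : ℝ) ^ ((d : ℝ) / 2 - 1 / 2)) atTop
      (𝓝 (Real.Gamma (d / 2) * Real.Gamma (1 / 2) / Real.Gamma (d / 2 + 1 / 2) * L)) := by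
  have ha : (d : ℝ) / 2 = 1 / 2 ∨ 1 ≤ (d : ℝ) / 2 := by
    rcases hd.eq_or_lt with rfl | hd
    · left; norm_num
    · right; rw [le_div_iff₀ two_pos]; exact_mod_cast hd
  have ha0 : 0 < (d : ℝ) / 2 := by positivity
  refine (tendsto_riemannSum_mul (fun x hx => betaKernel_nonneg hx)
    (tendsto_mul_betaKernel_nhdsGT_zero ha0)
    (tendsto_riemannSum_betaKernel one_half_pos (by norm_num) ha) h).congr fun n => ?_
  rw [sumInvSqrtProd_succ, sum_div, sum_div]
  refine sum_congr rfl fun m hm => ?_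
  rcases Nat.eq_zero_or_pos m with rfl | hm0
  · simp [sumInvSqrtProd_zero_right (by omega : d ≠ 0)]
  rw [mul_div_right_comm, betaKernel_half_div_mul hm0 (Nat.lt_succ_iff.1 (mem_range.1 hm))]

theorem tendsto_sumInvSqrtProd {d : ℕ} (hd : 1 ≤ d) :
    Tendsto (fun k : ℕ => sumInvSqrtProd d k / (k : ℝ) ^ ((d : ℝ) / 2 - 1)) atTop
      (𝓝 (Real.pi ^ ((d : ℝ) / 2) / Real.Gamma ((d : ℝ) / 2))) := by
  induction d, hd using Nat.le_induction with
  | base =>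
    have hone : Real.pi ^ ((1 : ℝ) / 2) / Real.Gamma (1 / 2) = 1 := by
      rw [Real.Gamma_one_half_eq, Real.sqrt_eq_rpow, div_self (by positivity)]
    simp only [Nat.cast_one, hone]
    refine tendsto_const_nhds.congr' (eventually_atTop.2 ⟨1, fun k hk => ?_⟩)
    have hk' : (0 : ℝ) < k := by exact_mod_cast hk
    dsimp only
    rw [sumInvSqrtProd_one, show (1 : ℝ) / 2 - 1 = -(1 / 2) by norm_num, Real.rpow_neg hk'.le,
      ← Real.sqrt_eq_rpow, div_self (by positivity)]
  | succ d hd ih =>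
    have hΓ : Real.Gamma ((d : ℝ) / 2) ≠ 0 := (Real.Gamma_pos_of_pos (by positivity)).ne'
    have hconst : Real.Gamma (d / 2) * Real.Gamma (1 / 2) / Real.Gamma (d / 2 + 1 / 2) *
        (Real.pi ^ ((d : ℝ) / 2) / Real.Gamma (d / 2)) =
          Real.pi ^ (((d + 1 : ℕ) : ℝ) / 2) / Real.Gamma (((d + 1 : ℕ) : ℝ) / 2) := by
      rw [show (((d + 1 : ℕ) : ℝ) / 2) = d / 2 + 1 / 2 by push_cast; ring,
        Real.rpow_add Real.pi_pos, Real.Gamma_one_half_eq, Real.sqrt_eq_rpow]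
      field_simp
    rw [← hconst, show (((d + 1 : ℕ) : ℝ) / 2 - 1) = d / 2 - 1 / 2 by push_cast; ring]
    exact tendsto_sumInvSqrtProd_succ hd ih

end Asymptotics

/-- For `a_n = Σ_{j_1+⋯+j_d ≤ n, j_i ≥ 1} √(j_1+⋯+j_d)/√(j_1⋯j_d)`, one has
`lim_n a_n / n^{(d+1)/2} = 2π^{d/2} / ((d+1) Γ(d/2))`. -/
theorem sum_sqrt_ratio_limit (d : ℕ) (hd : 1 ≤ d) :
    Tendsto (fun n : ℕ =>
        (∑ j ∈ (Fintype.piFinset fun _ : Fin d => Finset.Icc 1 n).filter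
            (fun j => ∑ i, j i ≤ n),
          Real.sqrt (∑ i, (j i : ℝ)) / Real.sqrt (∏ i, (j i : ℝ))) /
        (n : ℝ) ^ (((d : ℝ) + 1) / 2))
      atTop
      (nhds (2 * Real.pi ^ ((d : ℝ) / 2) / (((d : ℝ) + 1) * Real.Gamma ((d : ℝ) / 2)))) := by
  have hp : 0 ≤ (d : ℝ) / 2 - 1 / 2 := by
    rw [sub_nonneg, div_le_div_iff_of_pos_right two_pos]; exact_mod_cast hd
  have hconst : 1 / ((d : ℝ) / 2 - 1 / 2 + 1) * (Real.pi ^ ((d : ℝ) / 2) / Real.Gamma (d / 2)) =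
      2 * Real.pi ^ ((d : ℝ) / 2) / (((d : ℝ) + 1) * Real.Gamma ((d : ℝ) / 2)) := by
    have : Real.Gamma ((d : ℝ) / 2) ≠ 0 := (Real.Gamma_pos_of_pos (by positivity)).ne'
    rw [show (d : ℝ) / 2 - 1 / 2 + 1 = ((d : ℝ) + 1) / 2 by ring]
    field_simp
  rw [← hconst]
  refine (tendsto_riemannSum_mul (fun x hx => Real.rpow_nonneg hx.1 _)
    (tendsto_mul_rpow_nhdsGT_zero hp) (tendsto_riemannSum_rpow hp)
    (tendsto_sumInvSqrtProd hd)).congr fun n => ?_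
  rw [sum_sqrt_sum_div_sqrt_prod_eq, sum_div, sum_div,
    show ((d : ℝ) + 1) / 2 = d / 2 + 1 / 2 by ring]
  refine sum_congr rfl fun k hk => ?_
  rcases Nat.eq_zero_or_pos k with rfl | hk0
  · simp [sumInvSqrtProd_zero_right (by omega : d ≠ 0)]
  rw [mul_div_right_comm,
    rpow_sub_half_div_mul hk0 (hk0.trans_le (Nat.lt_succ_iff.1 (mem_range.1 hk)))]
end
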